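/- arXiv:2408.14633 — 4 statements merged into one kernel-verified Lean document; each statement's English description precedes it below -/
import Mathlib

section
/- If G is 1-extendable and M is a module of G, then for every maximum independent set I of G with I ∩ M nonempty, the set I ∩ M is a maximum independent set of G[M]. -/
open scoped Classical

variable {V : Type*}

/-- `S` is an independent set of the graph `G`. -/
def IndepF (G : SimpleGraph V) (S : Finset V) : Prop :=
  ∀ u ∈ S, ∀ v ∈ S, ¬ G.Adj u v

/-- The independence number of `G`. -/
noncomputable def alphaN [Fintype V] (G : SimpleGraph V) : ℕ :=
  Finset.univ.powerset.sup fun S => if IndepF G S then S.card else 0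

/-- `G` is 1-extendable: every vertex belongs to a maximum independent set. -/
def OneExt [Fintype V] (G : SimpleGraph V) : Prop :=
  ∀ v : V, ∃ S : Finset V, v ∈ S ∧ IndepF G S ∧ S.card = alphaN G

/-- The 1-extendable chromatic number of `G`. -/
noncomputable def chiOneExt [Fintype V] (G : SimpleGraph V) : ℕ :=
  sInf {k | ∃ c : V → Fin k, ∀ i : Fin k, OneExt (G.induce {v | c v = i})}

/-- The join (complete sum) of two graphs. -/
def gJoin {α β : Type*} (G : SimpleGraph α) (H : SimpleGraph β) : SimpleGraph (α ⊕ β) where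
  Adj u v := match u, v with
    | Sum.inl u, Sum.inl v => G.Adj u v
    | Sum.inr u, Sum.inr v => H.Adj u v
    | Sum.inl _, Sum.inr _ => True
    | Sum.inr _, Sum.inl _ => True
  symm := by constructor; rintro (u|u) (v|v) h <;> simp_all [SimpleGraph.adj_comm]
  loopless := by constructor; rintro (u|u) h <;> simp_all

/-- `M` is a module of `G`. -/
def IsModule (G : SimpleGraph V) (M : Set V) : Prop :=
  ∀ v ∉ M, (∀ m ∈ M, G.Adj v m) ∨ (∀ m ∈ M, ¬ G.Adj v m)

namespace IndepF

variable {G : SimpleGraph V}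

theorem mono {S T : Finset V} (hST : S ⊆ T) (hT : IndepF G T) : IndepF G S :=
  fun u hu v hv => hT u (hST hu) v (hST hv)

theorem card_le_alphaN [Fintype V] {S : Finset V} (hS : IndepF G S) : S.card ≤ alphaN G := by
  have := Finset.le_sup (f := fun S => if IndepF G S then S.card else 0)
    (Finset.mem_powerset.mpr (Finset.subset_univ S))
  simpa [hS, alphaN] using this

theorem union {S T : Finset V} (hS : IndepF G S) (hT : IndepF G T)
    (hST : ∀ u ∈ S, ∀ v ∈ T, ¬ G.Adj u v) : IndepF G (S ∪ T) := by
  intro u hu v hv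
  rcases Finset.mem_union.mp hu with hu | hu <;> rcases Finset.mem_union.mp hv with hv | hv
  · exact hS u hu v hv
  · exact hST u hu v hv
  · exact fun h => hST v hv u hu h.symm
  · exact hT u hu v hv

end IndepF

theorem IsModule.not_adj_of_not_adj {G : SimpleGraph V} {M : Set V} (hM : IsModule G M)
    {v m t : V} (hv : v ∉ M) (hm : m ∈ M) (hvm : ¬ G.Adj v m) (ht : t ∈ M) : ¬ G.Adj v t :=
  (hM v hv).elim (fun hall => absurd (hall m hm) hvm) (fun hnone => hnone t ht)

/-- The vertices of `I` outside `M` miss a vertex of `I ∩ M`, hence all of `M`. -/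
theorem IndepF.sdiff_union_of_isModule {G : SimpleGraph V} {M I T : Finset V}
    (hM : IsModule G ↑M) (hI : IndepF G I) (hne : (I ∩ M).Nonempty) (hTM : T ⊆ M)
    (hT : IndepF G T) : IndepF G (I \ M ∪ T) := by
  obtain ⟨m, hm⟩ := hne
  rw [Finset.mem_inter] at hm
  refine (hI.mono Finset.sdiff_subset).union hT fun v hv t ht => ?_
  rw [Finset.mem_sdiff] at hv
  exact hM.not_adj_of_not_adj (by exact_mod_cast hv.2) (by exact_mod_cast hm.2)
    (hI v hv.1 m hm.1) (by exact_mod_cast hTM ht)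

theorem inter_module_maxIndep_general [Fintype V] (G : SimpleGraph V)
    (M : Finset V) (hM : IsModule G ↑M)
    (I : Finset V) (hI : IndepF G I) (hImax : I.card = alphaN G)
    (hne : (I ∩ M).Nonempty) :
    IndepF G (I ∩ M) ∧ ∀ T : Finset V, T ⊆ M → IndepF G T → T.card ≤ (I ∩ M).card := by
  refine ⟨hI.mono Finset.inter_subset_left, fun T hTM hT => ?_⟩
  have hdisj : Disjoint (I \ M) T :=
    Finset.disjoint_left.mpr fun _ ha haT => (Finset.mem_sdiff.mp ha).2 (hTM haT)
  have hexch := (hI.sdiff_union_of_isModule hM hne hTM hT).card_le_alphaN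
  rw [Finset.card_union_of_disjoint hdisj, ← hImax, ← Finset.card_sdiff_add_card_inter I M] at hexch
  omega

/-- If  is 1-extendable,  a module, and  a maximum independent set of 
meeting , then  is a maximum independent set of . -/
theorem inter_module_maxIndep [Fintype V] (G : SimpleGraph V) (hG : OneExt G)
    (M : Finset V) (hM : IsModule G ↑M)
    (I : Finset V) (hI : IndepF G I) (hImax : I.card = alphaN G)
    (hne : (I ∩ M).Nonempty) :
    IndepF G (I ∩ M) ∧ ∀ T : Finset V, T ⊆ M → IndepF G T → T.card ≤ (I ∩ M).card :=
  inter_module_maxIndep_general G M hM I hI hImax hne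
end

section
/- For every graph G, the 1-extendable chromatic number of G is at most α(G). -/
open scoped Classical

variable {V : Type*}

/-!
Let `U(T)` be the union of the maximum independent sets of `G[T]`. Every maximum independent set
of `G[T]` lies in `U(T)`, so `G[U(T)]` has the same independence number as `G[T]` and is
1-extendable. Removing `U(T)` lowers the independence number: a maximum independent set of
`G[T \ U(T)]` of size `α(G[T])` would itself lie in `U(T)`. Peeling off `U` repeatedly, starting
from `T = V`, therefore partitions `V` into at most `α(G)` 1-extendable parts.
-/

section Peeling

variable {G : SimpleGraph V}

noncomputable def alphaOn (G : SimpleGraph V) (T : Finset V) : ℕ :=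
  T.powerset.sup fun S => if IndepF G S then S.card else 0

lemma IndepF.card_le_alphaOn {S T : Finset V} (hS : IndepF G S) (hST : S ⊆ T) :
    S.card ≤ alphaOn G T := by
  have h := Finset.le_sup (f := fun S => if IndepF G S then S.card else 0)
    (Finset.mem_powerset.2 hST)
  simp only [hS, if_true] at h
  exact h

lemma exists_indepF_card_eq_alphaOn (G : SimpleGraph V) (T : Finset V) :
    ∃ S ⊆ T, IndepF G S ∧ S.card = alphaOn G T := by
  obtain ⟨S, hST, hsup⟩ :=
    Finset.exists_mem_eq_sup T.powerset ⟨∅, Finset.empty_mem_powerset T⟩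
      fun S => if IndepF G S then S.card else 0
  by_cases hS : IndepF G S
  · exact ⟨S, Finset.mem_powerset.1 hST, hS, by simp [alphaOn, hsup, hS]⟩
  · exact ⟨∅, Finset.empty_subset T, by simp [IndepF], by simp [alphaOn, hsup, hS]⟩

lemma alphaOn_mono {S T : Finset V} (h : S ⊆ T) : alphaOn G S ≤ alphaOn G T := by
  obtain ⟨I, hIS, hI, hcard⟩ := exists_indepF_card_eq_alphaOn G S
  exact hcard ▸ hI.card_le_alphaOn (hIS.trans h)

lemma alphaOn_pos {T : Finset V} (hT : T.Nonempty) : 0 < alphaOn G T := by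
  obtain ⟨v, hv⟩ := hT
  have hindep : IndepF G {v} := by simp [IndepF]
  have h := hindep.card_le_alphaOn (Finset.singleton_subset_iff.2 hv)
  rwa [Finset.card_singleton] at h

lemma indepF_map_subtype_iff {s : Set V} {R : Finset s} :
    IndepF G (R.map (Function.Embedding.subtype _)) ↔ IndepF (G.induce s) R := by
  simp [IndepF]

lemma map_subtype_subtype_of_subset {S T : Finset V} (h : S ⊆ T) :
    (S.subtype (· ∈ (T : Set V))).map (Function.Embedding.subtype _) = S := by
  rw [Finset.subtype_map]
  exact Finset.filter_true_of_mem fun v hv => h hv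

lemma card_subtype_of_subset {S T : Finset V} (h : S ⊆ T) :
    (S.subtype (· ∈ (T : Set V))).card = S.card := by
  rw [Finset.card_subtype]
  exact congrArg Finset.card (Finset.filter_true_of_mem fun v hv => h hv)

lemma alphaN_induce (T : Finset V) : alphaN (G.induce (T : Set V)) = alphaOn G T := by
  apply le_antisymm
  · obtain ⟨R, -, hR, hcard⟩ :=
      exists_indepF_card_eq_alphaOn (G.induce (T : Set V)) Finset.univ
    rw [← indepF_map_subtype_iff] at hR
    calc alphaN (G.induce (T : Set V)) = (R.map (Function.Embedding.subtype _)).card := by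
          rw [Finset.card_map, hcard]; rfl
      _ ≤ alphaOn G T := hR.card_le_alphaOn fun v hv => by
          obtain ⟨w, -, rfl⟩ := Finset.mem_map.1 hv
          exact w.2
  · obtain ⟨S, hST, hS, hcard⟩ := exists_indepF_card_eq_alphaOn G T
    rw [← map_subtype_subtype_of_subset hST, indepF_map_subtype_iff] at hS
    calc alphaOn G T = (S.subtype (· ∈ (T : Set V))).card := by
          rw [← hcard, card_subtype_of_subset hST]
      _ ≤ alphaN (G.induce (T : Set V)) := hS.card_le_alphaOn (Finset.subset_univ _)

lemma oneExt_induce_of_forall_mem {T : Finset V}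
    (h : ∀ v ∈ T, ∃ S ⊆ T, v ∈ S ∧ IndepF G S ∧ S.card = alphaOn G T) :
    OneExt (G.induce (T : Set V)) := by
  rintro ⟨v, hv⟩
  obtain ⟨S, hST, hvS, hS, hcard⟩ := h v hv
  refine ⟨S.subtype (· ∈ (T : Set V)), Finset.mem_subtype.2 hvS, ?_, ?_⟩
  · rwa [← indepF_map_subtype_iff, map_subtype_subtype_of_subset hST]
  · rw [card_subtype_of_subset hST, hcard, alphaN_induce]

lemma oneExt_induce_of_eq {s t : Set V} [Fintype s] [Fintype t] (h : s = t)
    (hs : OneExt (G.induce s)) : OneExt (G.induce t) := by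
  subst h
  convert hs

noncomputable def maxIndepUnion (G : SimpleGraph V) (T : Finset V) : Finset V :=
  T.filter fun v => ∃ S ⊆ T, v ∈ S ∧ IndepF G S ∧ S.card = alphaOn G T

lemma maxIndepUnion_subset (T : Finset V) : maxIndepUnion G T ⊆ T :=
  Finset.filter_subset _ T

lemma IndepF.subset_maxIndepUnion {S T : Finset V} (hS : IndepF G S) (hST : S ⊆ T)
    (hcard : S.card = alphaOn G T) : S ⊆ maxIndepUnion G T :=
  fun _ hv => Finset.mem_filter.2 ⟨hST hv, S, hST, hv, hS, hcard⟩

lemma alphaOn_maxIndepUnion (T : Finset V) :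
    alphaOn G (maxIndepUnion G T) = alphaOn G T := by
  refine le_antisymm (alphaOn_mono (maxIndepUnion_subset T)) ?_
  obtain ⟨S, hST, hS, hcard⟩ := exists_indepF_card_eq_alphaOn G T
  exact hcard ▸ hS.card_le_alphaOn (hS.subset_maxIndepUnion hST hcard)

lemma oneExt_induce_maxIndepUnion (T : Finset V) :
    OneExt (G.induce (maxIndepUnion G T : Set V)) := by
  refine oneExt_induce_of_forall_mem fun v hv => ?_
  obtain ⟨-, S, hST, hvS, hS, hcard⟩ := Finset.mem_filter.1 hv
  exact ⟨S, hS.subset_maxIndepUnion hST hcard, hvS, hS,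
    hcard.trans (alphaOn_maxIndepUnion T).symm⟩

lemma alphaOn_sdiff_maxIndepUnion_lt {T : Finset V} (hT : T.Nonempty) :
    alphaOn G (T \ maxIndepUnion G T) < alphaOn G T := by
  by_contra! hge
  obtain ⟨S, hS_sub, hS, hcard⟩ := exists_indepF_card_eq_alphaOn G (T \ maxIndepUnion G T)
  have hcard_T : S.card = alphaOn G T :=
    hcard.trans (le_antisymm (alphaOn_mono Finset.sdiff_subset) hge)
  have hS_empty : S = ∅ := Finset.eq_empty_of_forall_notMem fun v hv =>
    (Finset.mem_sdiff.1 (hS_sub hv)).2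
      (hS.subset_maxIndepUnion (hS_sub.trans Finset.sdiff_subset) hcard_T hv)
  rw [hS_empty, Finset.card_empty] at hcard_T
  exact (alphaOn_pos hT).ne hcard_T

variable (G) in
lemma exists_coloring_oneExt (n : ℕ) (T : Finset V) (hT : alphaOn G T ≤ n) :
    ∃ c : V → ℕ, (∀ v ∈ T, c v < n) ∧
      ∀ i, OneExt (G.induce (T.filter (c · = i) : Set V)) := by
  induction n generalizing T with
  | zero =>
    obtain rfl : T = ∅ := Finset.not_nonempty_iff_eq_empty.1 fun hne =>
      (alphaOn_pos hne).ne' (Nat.le_zero.1 hT)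
    exact ⟨0, by simp, fun i v => by simpa using v.2⟩
  | succ n ih =>
    have hrest : alphaOn G (T \ maxIndepUnion G T) ≤ n := by
      rcases T.eq_empty_or_nonempty with rfl | hne
      · simp [alphaOn]
      · have := alphaOn_sdiff_maxIndepUnion_lt (G := G) hne
        omega
    obtain ⟨c, hc_lt, hc⟩ := ih (T \ maxIndepUnion G T) hrest
    refine ⟨fun v => if v ∈ maxIndepUnion G T then 0 else c v + 1, fun v hv => ?_, ?_⟩
    · by_cases hvU : v ∈ maxIndepUnion G T
      · simp [hvU]
      · simpa [hvU] using hc_lt v (Finset.mem_sdiff.2 ⟨hv, hvU⟩)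
    rintro (_ | i)
    · refine oneExt_induce_of_eq ?_ (oneExt_induce_maxIndepUnion T)
      ext v
      simpa using fun hv => maxIndepUnion_subset T hv
    · refine oneExt_induce_of_eq ?_ (hc i)
      ext v
      by_cases hvU : v ∈ maxIndepUnion G T <;> simp [hvU]

end Peeling

/-- The 1-extendable chromatic number is at most the independence number. -/
theorem chiOneExt_le_alphaN [Fintype V] (G : SimpleGraph V) :
    chiOneExt G ≤ alphaN G := by
  obtain ⟨c, hc_lt, hc⟩ := exists_coloring_oneExt G (alphaN G) Finset.univ le_rfl
  refine Nat.sInf_le ⟨fun v => ⟨c v, hc_lt v (Finset.mem_univ v)⟩, fun i => ?_⟩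
  refine oneExt_induce_of_eq ?_ (hc i)
  ext v
  simp [Fin.ext_iff]
end

section
/- For every graph G with n ≥ 1 vertices, the 1-extendable chromatic number of G is at most 2√n. -/
open scoped Classical

variable {V : Type*}

/-!
Let `W(A)` be the union of the maximum independent sets of `G[A]`. Then `G[W(A)]` is
1-extendable with the same independence number as `G[A]`, while removing `W(A)` from `A`
deletes at least `α(G[A])` vertices and strictly lowers the independence number.
Peeling off `W` repeatedly partitions `V` into 1-extendable parts. For `s = ⌊√n⌋ + 1`, the
rounds with `α ≥ s` number at most `n / s`, and since `α` drops every round, the rounds with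
`α < s` number at most `s - 1`; in total at most `n / s + s - 1 ≤ 2√n`.
-/

lemma div_succ_add_min_lt {m n a b t : ℕ} (hba : b < a) (hmn : m + a ≤ n) :
    m / (t + 1) + min b t < n / (t + 1) + min a t := by
  rcases le_or_gt a t with hat | hta
  · have : m / (t + 1) ≤ n / (t + 1) := Nat.div_le_div_right (by omega)
    omega
  · have : m / (t + 1) + 1 ≤ n / (t + 1) := by
      rw [← Nat.add_div_right m t.succ_pos]
      exact Nat.div_le_div_right (by omega)
    omega

lemma div_floor_sqrt_succ_add_floor_sqrt_le (n : ℕ) :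
    ((n / (⌊√(n : ℝ)⌋₊ + 1) + ⌊√(n : ℝ)⌋₊ : ℕ) : ℝ) ≤ 2 * √(n : ℝ) := by
  set s := ⌊√(n : ℝ)⌋₊
  have hs : (s : ℝ) ≤ √n := Nat.floor_le (Real.sqrt_nonneg _)
  have hdiv : ((n / (s + 1) : ℕ) : ℝ) ≤ √n := calc
    ((n / (s + 1) : ℕ) : ℝ) ≤ n / (s + 1 : ℝ) := by exact_mod_cast Nat.cast_div_le
    _ ≤ √n := by
      rw [div_le_iff₀ (by positivity)]
      calc (n : ℝ) = √n * √n := (Real.mul_self_sqrt n.cast_nonneg).symm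
        _ ≤ √n * (s + 1) := by gcongr; exact (Nat.lt_floor_add_one _).le
  push_cast
  linarith

namespace SimpleGraph

variable (G : SimpleGraph V)

noncomputable def alphaOn (A : Finset V) : ℕ :=
  A.powerset.sup fun S => if IndepF G S then S.card else 0

variable {G}

lemma card_le_alphaOn {A S : Finset V} (hSA : S ⊆ A) (hS : IndepF G S) :
    S.card ≤ alphaOn G A := by
  have := Finset.le_sup (f := fun S => if IndepF G S then S.card else 0)
    (Finset.mem_powerset.2 hSA)
  rwa [if_pos hS] at this

variable (G) in
lemma exists_indepF_card_eq_alphaOn (A : Finset V) :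
    ∃ S ⊆ A, IndepF G S ∧ S.card = alphaOn G A := by
  obtain ⟨S, hSA, hsup⟩ := Finset.exists_mem_eq_sup A.powerset
    ⟨∅, Finset.empty_mem_powerset A⟩ fun S => if IndepF G S then S.card else 0
  by_cases hS : IndepF G S
  · exact ⟨S, Finset.mem_powerset.1 hSA, hS, by rw [alphaOn, hsup, if_pos hS]⟩
  · exact ⟨∅, Finset.empty_subset A, by simp [IndepF], by rw [alphaOn, hsup, if_neg hS]; rfl⟩

lemma alphaOn_mono {A B : Finset V} (h : A ⊆ B) : alphaOn G A ≤ alphaOn G B := by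
  obtain ⟨S, hSA, hS, hcard⟩ := exists_indepF_card_eq_alphaOn G A
  exact hcard ▸ card_le_alphaOn (hSA.trans h) hS

lemma one_le_alphaOn {A : Finset V} (hA : A.Nonempty) : 1 ≤ alphaOn G A := by
  obtain ⟨v, hv⟩ := hA
  simpa using card_le_alphaOn (G := G) (Finset.singleton_subset_iff.2 hv)
    (by simp [IndepF])

lemma indepF_induce_iff {s : Set V} {T : Finset s} :
    IndepF (G.induce s) T ↔ IndepF G (T.map (Function.Embedding.subtype _)) := by
  simp [IndepF]

lemma exists_indepF_induce_of_subset {A S : Finset V} (hSA : S ⊆ A) (hS : IndepF G S) :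
    ∃ T : Finset (A : Set V), IndepF (G.induce A) T ∧ T.card = S.card ∧
      ∀ v : (A : Set V), v ∈ T ↔ (v : V) ∈ S := by
  have hmap : (S.subtype (· ∈ (A : Set V))).map (Function.Embedding.subtype _) = S :=
    Finset.subtype_map_of_mem hSA
  refine ⟨S.subtype _, indepF_induce_iff.2 (by rwa [hmap]), ?_, by simp⟩
  rw [← Finset.card_map (Function.Embedding.subtype _), hmap]

variable (G) in
lemma alphaN_induce (B : Finset V) : alphaN (G.induce (B : Set V)) = alphaOn G B := by
  apply le_antisymm
  · obtain ⟨T, -, hT, hcard⟩ := exists_indepF_card_eq_alphaOn (G.induce (B : Set V)) .univ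
    calc alphaN (G.induce (B : Set V)) = T.card := hcard.symm
      _ = (T.map (Function.Embedding.subtype _)).card := (Finset.card_map _).symm
      _ ≤ alphaOn G B := card_le_alphaOn (fun v hv => by
            obtain ⟨w, -, rfl⟩ := Finset.mem_map.1 hv; exact w.2) (indepF_induce_iff.1 hT)
  · obtain ⟨S, hSB, hS, hcard⟩ := exists_indepF_card_eq_alphaOn G B
    obtain ⟨T, hT, hTS, -⟩ := exists_indepF_induce_of_subset hSB hS
    exact hcard ▸ hTS ▸ card_le_alphaOn (Finset.subset_univ T) hT

lemma oneExt_induce_of_forall_mem {A : Finset V}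
    (h : ∀ v ∈ A, ∃ S ⊆ A, v ∈ S ∧ IndepF G S ∧ S.card = alphaOn G A) :
    OneExt (G.induce (A : Set V)) := by
  intro v
  obtain ⟨S, hSA, hvS, hS, hcard⟩ := h v v.2
  obtain ⟨T, hT, hTS, hmem⟩ := exists_indepF_induce_of_subset hSA hS
  exact ⟨T, (hmem v).2 hvS, hT, by rw [alphaN_induce, hTS, hcard]⟩

variable (G) in
noncomputable def maxIndepUnion (A : Finset V) : Finset V :=
  A.filter fun v => ∃ S ⊆ A, v ∈ S ∧ IndepF G S ∧ S.card = alphaOn G A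

lemma mem_maxIndepUnion {A : Finset V} {v : V} :
    v ∈ maxIndepUnion G A ↔ ∃ S ⊆ A, v ∈ S ∧ IndepF G S ∧ S.card = alphaOn G A := by
  refine ⟨fun hv => (Finset.mem_filter.1 hv).2, fun hv => Finset.mem_filter.2 ⟨?_, hv⟩⟩
  obtain ⟨S, hSA, hvS, -⟩ := hv
  exact hSA hvS

lemma maxIndepUnion_subset {A : Finset V} : maxIndepUnion G A ⊆ A :=
  Finset.filter_subset _ _

lemma subset_maxIndepUnion {A S : Finset V} (hSA : S ⊆ A) (hS : IndepF G S)
    (hcard : S.card = alphaOn G A) : S ⊆ maxIndepUnion G A :=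
  fun _ hv => mem_maxIndepUnion.2 ⟨S, hSA, hv, hS, hcard⟩

lemma alphaOn_le_card_maxIndepUnion {A : Finset V} : alphaOn G A ≤ (maxIndepUnion G A).card := by
  obtain ⟨S, hSA, hS, hcard⟩ := exists_indepF_card_eq_alphaOn G A
  exact hcard ▸ Finset.card_le_card (subset_maxIndepUnion hSA hS hcard)

lemma alphaOn_maxIndepUnion {A : Finset V} : alphaOn G (maxIndepUnion G A) = alphaOn G A := by
  refine le_antisymm (alphaOn_mono maxIndepUnion_subset) ?_
  obtain ⟨S, hSA, hS, hcard⟩ := exists_indepF_card_eq_alphaOn G A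
  exact hcard ▸ card_le_alphaOn (subset_maxIndepUnion hSA hS hcard) hS

lemma alphaOn_sdiff_maxIndepUnion_lt {A : Finset V} (hA : A.Nonempty) :
    alphaOn G (A \ maxIndepUnion G A) < alphaOn G A := by
  refine (alphaOn_mono Finset.sdiff_subset).lt_of_ne fun heq => ?_
  obtain ⟨S, hSA, hS, hcard⟩ := exists_indepF_card_eq_alphaOn G (A \ maxIndepUnion G A)
  -- a maximum independent set of `A \ W` would be one of `A`, hence inside `W`
  have hSW := subset_maxIndepUnion (hSA.trans Finset.sdiff_subset) hS (hcard.trans heq)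
  obtain ⟨v, hv⟩ := Finset.card_pos.1 (hcard.trans heq ▸ one_le_alphaOn hA)
  exact (Finset.mem_sdiff.1 (hSA hv)).2 (hSW hv)

lemma oneExt_induce_maxIndepUnion (A : Finset V) :
    OneExt (G.induce (maxIndepUnion G A : Set V)) := by
  refine oneExt_induce_of_forall_mem fun v hv => ?_
  obtain ⟨S, hSA, hvS, hS, hcard⟩ := mem_maxIndepUnion.1 hv
  exact ⟨S, subset_maxIndepUnion hSA hS hcard, hvS, hS, hcard.trans alphaOn_maxIndepUnion.symm⟩

variable (G) in
def OneExtColorable (A : Finset V) (k : ℕ) : Prop :=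
  ∃ c : V → ℕ, (∀ v ∈ A, c v < k) ∧ ∀ i, OneExt (G.induce (A.filter (c · = i) : Set V))

lemma OneExtColorable.mono {A : Finset V} {k l : ℕ} (h : OneExtColorable G A k) (hkl : k ≤ l) :
    OneExtColorable G A l :=
  let ⟨c, hlt, hc⟩ := h
  ⟨c, fun v hv => (hlt v hv).trans_le hkl, hc⟩

lemma oneExtColorable_empty : OneExtColorable G ∅ 0 :=
  ⟨0, by simp, fun _ v => by simpa using v.2⟩

lemma OneExtColorable.of_sdiff_maxIndepUnion {A : Finset V} {k : ℕ}
    (h : OneExtColorable G (A \ maxIndepUnion G A) k) : OneExtColorable G A (k + 1) := by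
  obtain ⟨c, hlt, hc⟩ := h
  set W := maxIndepUnion G A
  let c' : V → ℕ := fun v => if v ∈ W then 0 else c v + 1
  have hzero : A.filter (c' · = 0) = W := by
    ext v
    simpa [c'] using fun hW => maxIndepUnion_subset hW
  have hsucc (i : ℕ) : A.filter (c' · = i + 1) = (A \ W).filter (c · = i) := by
    ext v
    by_cases hW : v ∈ W <;> simp [c', hW]
  refine ⟨c', fun v hv => ?_, ?_⟩
  · by_cases hW : v ∈ W
    · simp [c', hW]
    · simpa [c', hW] using hlt v (Finset.mem_sdiff.2 ⟨hv, hW⟩)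
  · rintro (_ | i)
    · rw [hzero]
      exact oneExt_induce_maxIndepUnion A
    · rw [hsucc]
      exact hc i

lemma oneExtColorable_div_succ_add_min (t : ℕ) (A : Finset V) :
    OneExtColorable G A (A.card / (t + 1) + min (alphaOn G A) t) := by
  induction A using Finset.strongInduction with
  | H A ih =>
  rcases A.eq_empty_or_nonempty with rfl | hA
  · exact oneExtColorable_empty.mono (Nat.zero_le _)
  have hW : (maxIndepUnion G A).Nonempty :=
    Finset.card_pos.1 ((one_le_alphaOn hA).trans alphaOn_le_card_maxIndepUnion)
  have hcard : (A \ maxIndepUnion G A).card + alphaOn G A ≤ A.card := by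
    have := Finset.card_sdiff_add_card_eq_card (maxIndepUnion_subset (G := G) (A := A))
    have := alphaOn_le_card_maxIndepUnion (G := G) (A := A)
    omega
  exact (ih _ (Finset.sdiff_ssubset maxIndepUnion_subset hW)).of_sdiff_maxIndepUnion.mono
    (div_succ_add_min_lt (alphaOn_sdiff_maxIndepUnion_lt hA) hcard)

lemma chiOneExt_le_of_oneExtColorable_univ [Fintype V] {k : ℕ}
    (h : OneExtColorable G .univ k) : chiOneExt G ≤ k := by
  obtain ⟨c, hlt, hc⟩ := h
  refine Nat.sInf_le ⟨fun v => ⟨c v, hlt v (Finset.mem_univ v)⟩, fun i => ?_⟩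
  convert hc i using 2 <;> ext v <;> simp [Fin.ext_iff]

variable (G) in
lemma chiOneExt_le_card_div_succ_add [Fintype V] (t : ℕ) :
    chiOneExt G ≤ Fintype.card V / (t + 1) + t :=
  chiOneExt_le_of_oneExtColorable_univ <| (oneExtColorable_div_succ_add_min t .univ).mono <| by
    rw [Finset.card_univ]
    exact Nat.add_le_add_left (min_le_right _ _) _

end SimpleGraph

theorem chiOneExt_le_two_sqrt_general [Fintype V] (G : SimpleGraph V) :
    (chiOneExt G : ℝ) ≤ 2 * Real.sqrt (Fintype.card V) :=
  (Nat.cast_le.2 (G.chiOneExt_le_card_div_succ_add _)).trans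
    (div_floor_sqrt_succ_add_floor_sqrt_le _)

/-- For an `n`-vertex graph, the 1-extendable chromatic number is at most `2√n`. -/
theorem chiOneExt_le_two_sqrt [Fintype V] (G : SimpleGraph V) (hn : 1 ≤ Fintype.card V) :
    (chiOneExt G : ℝ) ≤ 2 * Real.sqrt (Fintype.card V) :=
  chiOneExt_le_two_sqrt_general G
end

section
/- Define graphs G_k recursively by G_1 = K_1 and G_{k+1} = K_1 + (G_k ∪ G_k), where + denotes join and ∪ disjoint union. Then for every k ≥ 1, the 1-extendable chromatic number of G_k is at least k. -/
open scoped Classical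

variable {V : Type*}

/-- Vertex types of the recursively defined graphs: paper index k corresponds to here-index k - 1. -/
def Vt : ℕ → Type
  | 0 => Unit
  | k + 1 => Unit ⊕ (Vt k ⊕ Vt k)

noncomputable instance VtFintype : ∀ k, Fintype (Vt k)
  | 0 => inferInstanceAs (Fintype Unit)
  | k + 1 =>
    letI := VtFintype k
    inferInstanceAs (Fintype (Unit ⊕ (Vt k ⊕ Vt k)))

/-- The recursively defined graphs: Gk 0 = K1 and Gk (k+1) = K1 + (Gk k ∪ Gk k). -/
def Gk : (k : ℕ) → SimpleGraph (Vt k)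
  | 0 => ⊥
  | k + 1 => gJoin (⊥ : SimpleGraph Unit) (Gk k ⊕g Gk k)

/-! In a 1-extendable coloring of `G_{k+1} = K_1 + (G_k ∪ G_k)`, a maximum independent set of the
apex's color class through the apex is just the apex, so that class is a clique and misses one
of the two (mutually non-adjacent) copies of `G_k`. The other color classes meet this copy in
unions of their components, which stay 1-extendable; so the copy is colored 1-extendably without
the apex's color, and induction on `k` finishes. -/

open SimpleGraph Finset

variable {W : Type*}

theorem IndepF.card_le_alphaN_s17 [Fintype V] {G : SimpleGraph V} {S : Finset V}
    (hS : IndepF G S) : S.card ≤ alphaN G := by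
  have := le_sup (f := fun S => if IndepF G S then S.card else 0) (mem_powerset.2 (subset_univ S))
  simpa [hS, alphaN] using this

theorem exists_indepF_card_eq_alphaN [Fintype V] (G : SimpleGraph V) :
    ∃ S : Finset V, IndepF G S ∧ S.card = alphaN G := by
  obtain ⟨S, -, hS⟩ := exists_mem_eq_sup univ.powerset ⟨∅, by simp⟩
    (fun S => if IndepF G S then S.card else 0)
  by_cases h : IndepF G S
  · exact ⟨S, h, by rw [alphaN, hS, if_pos h]⟩
  · exact ⟨∅, fun u hu => by simp at hu, by rw [alphaN, hS, if_neg h, card_empty]⟩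

theorem OneExt.of_subsingleton [Fintype V] [Subsingleton V] (G : SimpleGraph V) : OneExt G := by
  intro v
  have hv : IndepF G {v} := by simp [IndepF]
  obtain ⟨T, -, hT⟩ := exists_indepF_card_eq_alphaN G
  refine ⟨{v}, mem_singleton_self v, hv, le_antisymm hv.card_le_alphaN_s17 ?_⟩
  simpa [← hT] using card_le_one_of_subsingleton T

/-- If the image of `f` is closed under taking neighbours, a maximum independent set of `G` through
`f v` splits into its trace on the image and the rest, and replacing the trace by a larger
independent set of `H` would give a larger independent set of `G`. -/
theorem OneExt.of_embedding [Fintype V] [Fintype W] {H : SimpleGraph V} {G : SimpleGraph W}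
    (f : H ↪g G) (hf : ∀ a w, G.Adj (f a) w → w ∈ Set.range f) (hG : OneExt G) :
    OneExt H := by
  classical
  intro v
  obtain ⟨S, hvS, hS, hScard⟩ := hG (f v)
  set T := S.preimage f f.injective.injOn
  set R := S.filter (· ∉ Set.range f)
  have hT : IndepF H T := fun a ha b hb hab =>
    hS _ (mem_preimage.1 ha) _ (mem_preimage.1 hb) (f.map_adj_iff.2 hab)
  have hsplit : S.card = T.card + R.card := by
    rw [card_preimage, card_filter_add_card_filter_not]
  refine ⟨T, mem_preimage.2 hvS, hT, le_antisymm hT.card_le_alphaN_s17 ?_⟩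
  obtain ⟨M, hM, hMcard⟩ := exists_indepF_card_eq_alphaN H
  have hdisj : Disjoint (M.map f.toEmbedding) R := by
    simp only [Finset.disjoint_left, mem_map, mem_filter, R]
    rintro _ ⟨a, -, rfl⟩ ⟨-, ha⟩
    exact ha ⟨a, rfl⟩
  have hU : IndepF G (M.map f.toEmbedding ∪ R) := by
    have hR : ∀ x ∈ R, ∀ a, ¬ G.Adj (f a) x := fun x hx a hax =>
      (mem_filter.1 hx).2 (hf a x hax)
    simp only [IndepF, mem_union, mem_map]
    rintro _ (⟨a, ha, rfl⟩ | hx) _ (⟨b, hb, rfl⟩ | hy)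
    · exact fun hab => hM a ha b hb (f.map_adj_iff.1 hab)
    · exact hR _ hy a
    · exact fun hab => hR _ hx b hab.symm
    · exact hS _ (mem_filter.1 hx).1 _ (mem_filter.1 hy).1
  have := hU.card_le_alphaN_s17
  rw [card_union_of_disjoint hdisj, card_map] at this
  omega

theorem OneExt.adj_of_forall_adj [Fintype V] {G : SimpleGraph V} (hG : OneExt G) {u : V}
    (hu : ∀ w, w ≠ u → G.Adj u w) {x y : V} (hxy : x ≠ y) : G.Adj x y := by
  obtain ⟨S, huS, hS, hScard⟩ := hG u
  have hSu : S ⊆ {u} := fun w hw =>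
    mem_singleton.2 (by_contra fun hwu => hS u huS w hw (hu w hwu))
  by_contra hadj
  have hpair : IndepF G {x, y} := by
    simp only [IndepF, mem_insert, mem_singleton]
    rintro _ (rfl | rfl) _ (rfl | rfl)
    exacts [G.irrefl, hadj, fun h => hadj h.symm, G.irrefl]
  have := calc 2 = ({x, y} : Finset V).card := (card_pair hxy).symm
    _ ≤ S.card := hScard ▸ hpair.card_le_alphaN_s17
    _ ≤ ({u} : Finset V).card := card_le_card hSu
  simp at this

def IsOneExtColoring [Fintype V] (G : SimpleGraph V) {N : ℕ} (c : V → Fin N) : Prop :=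
  ∀ i, OneExt (G.induce {v | c v = i})

namespace IsOneExtColoring

variable [Fintype V] {G : SimpleGraph V} {N : ℕ} {c : V → Fin N}

theorem of_injective (hc : Function.Injective c) : IsOneExtColoring G c := fun i =>
  have : Subsingleton {v | c v = i} := ⟨fun a b => Subtype.ext (hc (a.2.trans b.2.symm))⟩
  OneExt.of_subsingleton _

theorem comp_embedding [Fintype W] {H : SimpleGraph W} (hc : IsOneExtColoring G c) (f : H ↪g G)
    (hf : ∀ a v, G.Adj (f a) v → c v = c (f a) → v ∈ Set.range f) :
    IsOneExtColoring H (c ∘ f) := by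
  intro i
  let f' : H.induce {a | c (f a) = i} ↪g G.induce {v | c v = i} :=
    { toFun := fun a => ⟨f a, a.2⟩
      inj' := fun a b hab => Subtype.ext (f.injective (congrArg Subtype.val hab))
      map_rel_iff' := f.map_adj_iff }
  refine OneExt.of_embedding f' ?_ (hc i)
  rintro a ⟨v, hv⟩ hav
  obtain ⟨b, rfl⟩ := hf a v hav (hv.trans a.2.symm)
  exact ⟨⟨b, hv⟩, rfl⟩

end IsOneExtColoring

def gJoin.embeddingRight {α β : Type*} (G : SimpleGraph α) (H : SimpleGraph β) :
    H ↪g gJoin G H where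
  toFun := Sum.inr
  inj' := Sum.inr_injective
  map_rel_iff' := Iff.rfl

theorem SimpleGraph.mem_range_sumInl_of_adj {G : SimpleGraph V} {H : SimpleGraph W} {a : V}
    {w : V ⊕ W} (h : (G ⊕g H).Adj (Sum.inl a) w) :
    w ∈ Set.range (Embedding.sumInl (G := G) (H := H)) := by
  rcases w with b | b
  · exact ⟨b, rfl⟩
  · simp at h

theorem SimpleGraph.mem_range_sumInr_of_adj {G : SimpleGraph V} {H : SimpleGraph W} {a : W}
    {w : V ⊕ W} (h : (G ⊕g H).Adj (Sum.inr a) w) :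
    w ∈ Set.range (Embedding.sumInr (G := G) (H := H)) := by
  rcases w with b | b
  · simp at h
  · exact ⟨b, rfl⟩

namespace Gk

theorem adj_inl_of_ne {m : ℕ} {w : Vt (m + 1)} (hw : w ≠ Sum.inl ()) :
    (Gk (m + 1)).Adj (Sum.inl ()) w := by
  rcases w with ⟨⟩ | w
  · exact absurd rfl hw
  · trivial

theorem not_adj_between_copies {m : ℕ} (a b : Vt m) :
    ¬ (Gk (m + 1)).Adj (Sum.inr (Sum.inl a)) (Sum.inr (Sum.inr b)) := by
  change ¬ (Gk m ⊕g Gk m).Adj (Sum.inl a) (Sum.inr b)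
  simp

def copy (m : ℕ) (g : Gk m ↪g Gk m ⊕g Gk m) : Gk m ↪g Gk (m + 1) :=
  (gJoin.embeddingRight ⊥ _).comp g

theorem isOneExtColoring_comp_copy {m N : ℕ} {c : Vt (m + 1) → Fin N}
    (hc : IsOneExtColoring (Gk (m + 1)) c) {g : Gk m ↪g Gk m ⊕g Gk m}
    (hg : ∀ a w, (Gk m ⊕g Gk m).Adj (g a) w → w ∈ Set.range g)
    (hgc : ∀ a, c (copy m g a) ≠ c (Sum.inl ())) :
    IsOneExtColoring (Gk m) (c ∘ copy m g) := by
  refine hc.comp_embedding _ fun a w haw hw => ?_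
  rcases w with ⟨⟩ | w
  · exact absurd hw.symm (hgc a)
  · obtain ⟨b, rfl⟩ := hg a w haw
    exact ⟨b, rfl⟩

theorem exists_copy_isOneExtColoring {m N : ℕ} {c : Vt (m + 1) → Fin N}
    (hc : IsOneExtColoring (Gk (m + 1)) c) :
    ∃ f : Gk m ↪g Gk (m + 1),
      IsOneExtColoring (Gk m) (c ∘ f) ∧ ∀ a, c (f a) ≠ c (Sum.inl ()) := by
  have hsplit : (∀ a, c (copy m Embedding.sumInl a) ≠ c (Sum.inl ())) ∨
      (∀ b, c (copy m Embedding.sumInr b) ≠ c (Sum.inl ())) := by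
    by_contra! ⟨⟨a, ha⟩, b, hb⟩
    have hapex : ∀ w : {v | c v = c (Sum.inl ())}, w ≠ ⟨Sum.inl (), rfl⟩ →
        ((Gk (m + 1)).induce {v | c v = c (Sum.inl ())}).Adj ⟨Sum.inl (), rfl⟩ w :=
      fun w hne => adj_inl_of_ne fun h => hne (Subtype.ext h)
    have hne : (⟨_, ha⟩ : {v | c v = c (Sum.inl ())}) ≠ ⟨_, hb⟩ :=
      fun h => Sum.inl_ne_inr (Sum.inr_injective (congrArg Subtype.val h))
    exact not_adj_between_copies a b ((hc _).adj_of_forall_adj hapex hne)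
  rcases hsplit with h | h
  · exact ⟨_, isOneExtColoring_comp_copy hc (fun _ _ => mem_range_sumInl_of_adj) h, h⟩
  · exact ⟨_, isOneExtColoring_comp_copy hc (fun _ _ => mem_range_sumInr_of_adj) h, h⟩

theorem succ_le_card_image : ∀ {m N : ℕ} {c : Vt m → Fin N},
    IsOneExtColoring (Gk m) c → m + 1 ≤ (univ.image c).card
  | 0, _, c, _ => card_pos.2 ⟨c (), mem_image_of_mem c (mem_univ _)⟩
  | m + 1, _, c, hc => by
    obtain ⟨f, hf, hfc⟩ := exists_copy_isOneExtColoring hc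
    have hsub : insert (c (Sum.inl ())) (univ.image (c ∘ f)) ⊆ univ.image c :=
      insert_subset (mem_image_of_mem c (mem_univ _))
        (by rw [← image_image]; exact image_subset_image (subset_univ _))
    have hnot : c (Sum.inl ()) ∉ univ.image (c ∘ f) := by
      simpa using hfc
    calc m + 1 + 1 ≤ (univ.image (c ∘ f)).card + 1 := by gcongr; exact succ_le_card_image hf
      _ = (insert (c (Sum.inl ())) (univ.image (c ∘ f))).card := (card_insert_of_notMem hnot).symm
      _ ≤ (univ.image c).card := card_le_card hsub

end Gk

theorem chiOneExt_Gk_ge_general (k : ℕ) : k ≤ chiOneExt (Gk (k - 1)) := by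
  refine le_csInf ⟨_, _, IsOneExtColoring.of_injective (Fintype.equivFin _).injective⟩ ?_
  rintro N ⟨c, hc⟩
  calc k ≤ k - 1 + 1 := by omega
    _ ≤ (univ.image c).card := Gk.succ_le_card_image hc
    _ ≤ N := (card_le_univ _).trans_eq (Fintype.card_fin N)

/-- For every k ≥ 1, the 1-extendable chromatic number of the paper graph G_k
(here Gk (k - 1)) is at least k. -/
theorem chiOneExt_Gk_ge (k : ℕ) (hk : 1 ≤ k) : k ≤ chiOneExt (Gk (k - 1)) :=
  chiOneExt_Gk_ge_general k
end
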